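/- Let N be a nonempty nested set of C_m and suppose the rotation subgroup H = (D_m)_N ∩ ⟨σ_1⟩ of its stabilizer has order d. Then H acts freely on the elements of N (every H-orbit on N has cardinality exactly d); in particular d divides |N|, and N decomposes into d pairwise disjoint subsets N_1, …, N_d of equal cardinality |N|/d with σ_{m/d}^{i−1}·N_1 = N_i for i = 1, …, d. -/

import Mathlib

open Pointwise

def cycleGraph (m : ℕ) : SimpleGraph (ZMod m) where
  Adj i j := i ≠ j ∧ (j = i + 1 ∨ i = j + 1)
  symm := ⟨fun i j (h : i ≠ j ∧ (j = i + 1 ∨ i = j + 1)) => ⟨h.1.symm, h.2.symm⟩⟩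
  loopless := ⟨fun i h => h.1 rfl⟩

def IsConnSubset (m : ℕ) (I : Set (ZMod m)) : Prop :=
  ((cycleGraph m).induce I).Connected

def IsNested (m : ℕ) (N : Set (Set (ZMod m))) : Prop :=
  N.Finite ∧
  (∀ I ∈ N, I.Nonempty ∧ I ≠ Set.univ ∧ IsConnSubset m I) ∧
  (∀ I ∈ N, ∀ J ∈ N, I ⊆ J ∨ J ⊆ I ∨ I ∩ J = ∅) ∧
  (∀ S : Finset (Set (ZMod m)), ↑S ⊆ N → 2 ≤ S.card →
    ((S : Set (Set (ZMod m))).Pairwise fun I J => I ∩ J = ∅) →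
    ¬ IsConnSubset m (⋃ I ∈ S, I))

def rot (m : ℕ) : Equiv.Perm (ZMod m) := Equiv.addRight 1

def cycRefl (m : ℕ) : Equiv.Perm (ZMod m) := Equiv.neg (ZMod m)

def dihedral (m : ℕ) : Subgroup (Equiv.Perm (ZMod m)) :=
  Subgroup.closure {rot m, cycRefl m}

def IsReflection (m : ℕ) (φ : Equiv.Perm (ZMod m)) : Prop :=
  φ ∈ dihedral m ∧ φ ∉ Subgroup.zpowers (rot m)

def nestedStab (m : ℕ) (N : Set (Set (ZMod m))) : Subgroup (Equiv.Perm (ZMod m)) :=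
  dihedral m ⊓ MulAction.stabilizer (Equiv.Perm (ZMod m)) N

def rotStab (m : ℕ) (N : Set (Set (ZMod m))) : Subgroup (Equiv.Perm (ZMod m)) :=
  Subgroup.zpowers (rot m) ⊓ nestedStab m N

noncomputable def alphaNum (m d k : ℕ) : ℕ :=
  {N : Set (Set (ZMod m)) | IsNested m N ∧ N.ncard = k ∧
    Nat.card (rotStab m N) = d ∧ ¬ ∃ φ ∈ nestedStab m N, IsReflection m φ}.ncard

noncomputable def betaNum (m d k : ℕ) : ℕ :=
  {N : Set (Set (ZMod m)) | IsNested m N ∧ N.ncard = k ∧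
    Nat.card (rotStab m N) = d ∧ ∃ φ ∈ nestedStab m N, IsReflection m φ}.ncard

noncomputable def gammaNum (m d k : ℕ) : ℕ := alphaNum m d k + betaNum m d k

/-!
A nontrivial rotation cannot fix a member `I` of a nested set: `I` is a proper nonempty connected
subset of the cycle, so it has exactly one left endpoint `b` (`b ∈ I`, `b - 1 ∉ I`), and a
rotation fixing `I` permutes its left endpoints, hence fixes `b`. Uniqueness of the left endpoint
is a discrete intermediate value argument along walks in `I` for the height `y ↦ (y - x).val`
measured from a point `x ∉ I`.

So the rotation stabilizer `H`, a subgroup of order `d` of the cyclic group `⟨σ₁⟩` of order `m`,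
acts freely on `N`; it is generated by `ρ = σ_{m/d}`. Every `H`-orbit therefore has `d` elements,
and a set `N₁` of representatives of the `⟨ρ⟩`-orbits yields the partition `Nᵢ = ρ^(i-1) • N₁`.
-/

theorem ZMod.val_add_one_of_add_one_ne_zero {m : ℕ} [NeZero m] {a : ZMod m} (h : a + 1 ≠ 0) :
    (a + 1).val = a.val + 1 := by
  have : Fact (1 < m) := ⟨by
    by_contra! hle
    obtain rfl : m = 1 := by have := NeZero.pos m; omega
    exact h (Subsingleton.elim _ _)⟩
  rw [ZMod.val_add, ZMod.val_one]
  refine Nat.mod_eq_of_lt (lt_of_le_of_ne (ZMod.val_lt a) fun hm => h ?_)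
  rw [← ZMod.val_eq_zero, ZMod.val_add, ZMod.val_one, hm, Nat.mod_self]

theorem SimpleGraph.Walk.exists_mem_support_apply_eq {V : Type*} {G : SimpleGraph V} {f : V → ℕ}
    (hf : ∀ ⦃u v⦄, G.Adj u v → f v ≤ f u + 1) {u v : V} (p : G.Walk u v) {n : ℕ}
    (hun : f u ≤ n) (hnv : n ≤ f v) : ∃ w ∈ p.support, f w = n := by
  induction p with
  | nil => exact ⟨_, List.mem_singleton_self _, by omega⟩
  | @cons u w v huw q ih =>
    rcases eq_or_lt_of_le hun with rfl | hlt
    · exact ⟨u, List.mem_cons_self, rfl⟩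
    · obtain ⟨z, hz, hzn⟩ := ih (by have := hf huw; omega) hnv
      exact ⟨z, List.mem_cons_of_mem _ hz, hzn⟩

theorem SimpleGraph.Preconnected.ordConnected_range {V : Type*} {G : SimpleGraph V}
    (hG : G.Preconnected) {f : V → ℕ} (hf : ∀ ⦃u v⦄, G.Adj u v → f v ≤ f u + 1) :
    (Set.range f).OrdConnected := by
  refine ⟨?_⟩
  rintro _ ⟨u, rfl⟩ _ ⟨v, rfl⟩ n ⟨hun, hnv⟩
  obtain ⟨w, -, rfl⟩ := (hG u v).some.exists_mem_support_apply_eq hf hun hnv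
  exact ⟨w, rfl⟩

theorem Subgroup.eq_zpowers_pow_orderOf_div_card {G : Type*} [Group G] {g : G}
    (hg : IsOfFinOrder g) {H : Subgroup G} (hH : H ≤ Subgroup.zpowers g) :
    H = Subgroup.zpowers (g ^ (orderOf g / Nat.card H)) := by
  obtain ⟨n, rfl⟩ := (Subgroup.le_zpowers_iff g H).mp hH
  rw [Nat.card_zpowers, hg.orderOf_pow, Nat.div_div_self (Nat.gcd_dvd_left _ _) hg.orderOf_pos.ne']
  refine le_antisymm (Subgroup.zpowers_le.mpr ?_) (Subgroup.zpowers_le.mpr ?_)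
  · obtain ⟨k, hk⟩ := Nat.gcd_dvd_right (orderOf g) n
    rw [show g ^ n = (g ^ (orderOf g).gcd n) ^ k by rw [← pow_mul, ← hk]]
    exact Subgroup.npow_mem_zpowers _ _
  · -- Bézout: `gcd (orderOf g) n = orderOf g * a + n * b`.
    refine Subgroup.mem_zpowers_iff.mpr ⟨Nat.gcdB (orderOf g) n, ?_⟩
    rw [← zpow_natCast g (Nat.gcd _ _), Nat.gcd_eq_gcd_ab, zpow_add, zpow_mul, zpow_mul,
      zpow_natCast, zpow_natCast, pow_orderOf_eq_one, one_zpow, one_mul]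

theorem Subgroup.ncard_setOf_eq_smul_of_free {G α : Type*} [Group G] [MulAction G α]
    {H : Subgroup G} {x : α} (hfree : ∀ h ∈ H, h • x = x → h = 1) :
    {y | ∃ h ∈ H, y = h • x}.ncard = Nat.card H := by
  have hrange : {y | ∃ h ∈ H, y = h • x} = Set.range fun h : H => (h : G) • x := by
    ext; simp [eq_comm]
  rw [hrange, Set.ncard_range_of_injective]
  intro h₁ h₂ (h12 : (h₁ : G) • x = (h₂ : G) • x)
  have := hfree _ (H.mul_mem (H.inv_mem h₂.2) h₁.2) (by rw [mul_smul, h12, inv_smul_smul])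
  exact Subtype.ext (inv_mul_eq_one.mp this).symm

theorem exists_transversal_pow_smul {G α : Type*} [Group G] [MulAction G α] {g : G}
    (hg : IsOfFinOrder g) {S : Set α} (hS : g • S = S)
    (hfree : ∀ x ∈ S, ∀ h ∈ Subgroup.zpowers g, h • x = x → h = 1) :
    ∃ T ⊆ S, (∀ i < orderOf g, ∀ j < orderOf g, i ≠ j → Disjoint (g ^ i • T) (g ^ j • T)) ∧
      ⋃ i ∈ Finset.range (orderOf g), g ^ i • T = S := by
  classical
  set K := Subgroup.zpowers g
  have hKS : ∀ h ∈ K, h • S = S := fun h hh =>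
    Subgroup.zpowers_le.mpr (MulAction.mem_stabilizer_iff.mpr hS) hh
  have hgK : ∀ i : ℕ, g ^ i ∈ K := Subgroup.npow_mem_zpowers g
  let r : α → α := fun x => (Quotient.mk (MulAction.orbitRel K α) x).out
  have hr_smul : ∀ x, ∀ h ∈ K, r (h • x) = r x := fun x h hh =>
    congrArg Quotient.out (Quotient.sound (MulAction.orbitRel_apply.mpr ⟨⟨h, hh⟩, rfl⟩))
  refine ⟨{x ∈ S | r x = x}, fun x hx => hx.1, ?_, ?_⟩
  · intro i hi j hj hij
    rw [Set.disjoint_left]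
    rintro _ ⟨t, ⟨htS, hrt⟩, rfl⟩ ⟨t', ⟨-, hrt'⟩, htt' : g ^ j • t' = g ^ i • t⟩
    obtain rfl : t' = t := by
      rw [← hrt, ← hrt', ← hr_smul t' _ (hgK j), htt', hr_smul t _ (hgK i)]
    have := hfree t' htS _ (K.mul_mem (K.inv_mem (hgK i)) (hgK j))
      (by rw [mul_smul, htt', inv_smul_smul])
    exact hij (pow_injOn_Iio_orderOf hi hj (inv_mul_eq_one.mp this))
  · refine subset_antisymm (Set.iUnion₂_subset fun i _ => ?_) fun x hx => ?_
    · exact (Set.smul_set_mono fun t ht => ht.1).trans (hKS _ (hgK i)).le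
    obtain ⟨⟨k, hk⟩, hkx : k • x = r x⟩ :=
      MulAction.orbitRel_apply.mp (Quotient.mk_out (s := MulAction.orbitRel K α) x)
    have hrS : r x ∈ S := hkx ▸ hKS k hk ▸ Set.smul_mem_smul_set hx
    have hrr : r (r x) = r x := (congrArg r hkx).symm.trans (hr_smul x k hk)
    obtain ⟨⟨h, hh⟩, hhx : h • r x = x⟩ := MulAction.mem_orbit_symm.mp ⟨(⟨k, hk⟩ : K), hkx⟩
    obtain ⟨i, hi, rfl⟩ : ∃ i < orderOf g, g ^ i = h := by
      simpa using hg.mem_zpowers_iff_mem_range_orderOf.mp hh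
    exact Set.mem_iUnion₂.mpr ⟨i, Finset.mem_range.mpr hi, r x, ⟨hrS, hrr⟩, hhx⟩

theorem ncard_biUnion_range_pow_smul {G α : Type*} [Group G] [MulAction G α] (g : G)
    {T : Set α} (hT : T.Finite) {n : ℕ}
    (hdisj : ∀ i < n, ∀ j < n, i ≠ j → Disjoint (g ^ i • T) (g ^ j • T)) :
    (⋃ i ∈ Finset.range n, g ^ i • T).ncard = n * T.ncard := by
  have h := (Finset.range n).finite_toSet.ncard_biUnion (fun i _ => hT.smul_set)
    fun i hi j hj hij => hdisj i (Finset.mem_range.mp hi) j (Finset.mem_range.mp hj) hij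
  rw [finsum_mem_coe_finset] at h
  simpa [Set.ncard_smul_set] using h

theorem ZMod.val_sub_eq_val_sub_one_sub_add_one {m : ℕ} [NeZero m] {x z : ZMod m} (hz : z ≠ x) :
    (z - x).val = (z - 1 - x).val + 1 := by
  have e : z - x = z - 1 - x + 1 := by ring
  rw [e, ZMod.val_add_one_of_add_one_ne_zero (e ▸ sub_ne_zero.mpr hz)]

theorem exists_mem_sub_one_notMem {m : ℕ} [NeZero m] {I : Set (ZMod m)} (hne : I.Nonempty)
    (hI : I ≠ Set.univ) : ∃ b ∈ I, b - 1 ∉ I := by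
  obtain ⟨x, hx⟩ := (Set.ne_univ_iff_exists_notMem I).mp hI
  obtain ⟨b, hb, hmin⟩ := I.exists_min_image (fun y => (y - x).val) I.toFinite hne
  refine ⟨b, hb, fun hb1 => ?_⟩
  have := hmin _ hb1
  rw [ZMod.val_sub_eq_val_sub_one_sub_add_one (fun h : b = x => hx (h ▸ hb))] at this
  omega

namespace IsConnSubset

variable {m : ℕ} [NeZero m] {I : Set (ZMod m)} {x b c y : ZMod m}

theorem ordConnected_range_val_sub (hI : IsConnSubset m I) (hx : x ∉ I) :
    (Set.range fun y : I => ((y : ZMod m) - x).val).OrdConnected := by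
  refine hI.preconnected.ordConnected_range fun u v huv => ?_
  have hne : ∀ w : I, (w : ZMod m) ≠ x := fun w hw => hx (hw ▸ w.2)
  rcases (SimpleGraph.induce_adj.mp huv).2 with h | h
  · rw [ZMod.val_sub_eq_val_sub_one_sub_add_one (hne v), h, add_sub_cancel_right]
  · rw [ZMod.val_sub_eq_val_sub_one_sub_add_one (hne u), h, add_sub_cancel_right]
    omega

theorem val_sub_le (hI : IsConnSubset m I) (hx : x ∉ I) (hb : b ∈ I) (hb1 : b - 1 ∉ I)
    (hy : y ∈ I) : (b - x).val ≤ (y - x).val := by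
  by_contra! hlt
  have hstep := ZMod.val_sub_eq_val_sub_one_sub_add_one (x := x) (fun h : b = x => hx (h ▸ hb))
  obtain ⟨z, hz⟩ := (hI.ordConnected_range_val_sub hx).out ⟨⟨y, hy⟩, rfl⟩ ⟨⟨b, hb⟩, rfl⟩
    (show (b - 1 - x).val ∈ Set.Icc (y - x).val (b - x).val from ⟨by omega, by omega⟩)
  have hzb : (z : ZMod m) = b - 1 := sub_left_inj.mp (ZMod.val_injective m hz)
  exact hb1 (hzb ▸ z.2)

theorem eq_of_sub_one_notMem (hI : IsConnSubset m I) (hb : b ∈ I) (hb1 : b - 1 ∉ I)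
    (hc : c ∈ I) (hc1 : c - 1 ∉ I) : b = c := by
  have := le_antisymm (hI.val_sub_le hb1 hb hb1 hc) (hI.val_sub_le hb1 hc hc1 hb)
  exact sub_left_inj.mp (ZMod.val_injective m this)

theorem eq_zero_of_add_mem_iff (hI : IsConnSubset m I) (hne : I.Nonempty) (hIu : I ≠ Set.univ)
    (hc : ∀ y, y + c ∈ I ↔ y ∈ I) : c = 0 := by
  obtain ⟨b, hb, hb1⟩ := exists_mem_sub_one_notMem hne hIu
  have hbc1 : b + c - 1 ∉ I := by rwa [show b + c - 1 = b - 1 + c by ring, hc]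
  simpa using hI.eq_of_sub_one_notMem ((hc b).2 hb) hbc1 hb hb1

end IsConnSubset

theorem rot_zpow (m : ℕ) (k : ℤ) : rot m ^ k = Equiv.addRight (k : ZMod m) := by
  rw [rot, Equiv.zsmul_addRight, zsmul_one]

theorem orderOf_rot (m : ℕ) : orderOf (rot m) = m := by
  refine Nat.dvd_right_iff_eq.mp fun k => ?_
  rw [orderOf_dvd_iff_pow_eq_one, ← zpow_natCast, rot_zpow, Int.cast_natCast,
    ← ZMod.natCast_eq_zero_iff k m]
  refine ⟨fun h => by simpa using congrArg (· 0) h, fun h => by rw [h, Equiv.addRight_zero]⟩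

theorem eq_one_of_mem_rotStab_of_smul_eq {m : ℕ} [NeZero m] {N : Set (Set (ZMod m))}
    (hN : IsNested m N) {φ : Equiv.Perm (ZMod m)} (hφ : φ ∈ rotStab m N) {I : Set (ZMod m)}
    (hI : I ∈ N) (hφI : φ • I = I) : φ = 1 := by
  obtain ⟨k, rfl⟩ := Subgroup.mem_zpowers_iff.mp (Subgroup.mem_inf.mp hφ).1
  obtain ⟨hne, hIu, hconn⟩ := hN.2.1 I hI
  rw [rot_zpow] at hφI ⊢
  have hk : (k : ZMod m) = 0 := hconn.eq_zero_of_add_mem_iff hne hIu fun y => by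
    conv_lhs => rw [← hφI]
    exact Set.smul_mem_smul_set_iff
  rw [hk, Equiv.addRight_zero]

theorem rotStab_le_zpowers_rot (m : ℕ) (N : Set (Set (ZMod m))) :
    rotStab m N ≤ Subgroup.zpowers (rot m) :=
  inf_le_left

theorem rotStab_le_stabilizer (m : ℕ) (N : Set (Set (ZMod m))) :
    rotStab m N ≤ MulAction.stabilizer (Equiv.Perm (ZMod m)) N :=
  inf_le_right.trans inf_le_right

theorem rotation_stab_acts_freely_general (m d : ℕ) (hm : 3 ≤ m) (N : Set (Set (ZMod m)))
    (hN : IsNested m N)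
    (hd : Nat.card (rotStab m N) = d) :
    (∀ I ∈ N, {J : Set (ZMod m) | ∃ φ ∈ rotStab m N, J = φ • I}.ncard = d) ∧
    d ∣ N.ncard ∧
    ∃ Ns : ℕ → Set (Set (ZMod m)),
      (∀ i < d, Ns i ⊆ N) ∧
      (∀ i < d, ∀ j < d, i ≠ j → Disjoint (Ns i) (Ns j)) ∧
      (⋃ i ∈ Finset.range d, Ns i) = N ∧
      (∀ i < d, (Ns i).ncard = N.ncard / d) ∧
      (∀ i < d, ((rot m) ^ (m / d)) ^ i • Ns 0 = Ns i) := by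
  have : NeZero m := ⟨by omega⟩
  have hfree : ∀ I ∈ N, ∀ φ ∈ rotStab m N, φ • I = I → φ = 1 :=
    fun I hI φ hφ => eq_one_of_mem_rotStab_of_smul_eq hN hφ hI
  set ρ := rot m ^ (m / d)
  have hHρ : rotStab m N = Subgroup.zpowers ρ := by
    have := Subgroup.eq_zpowers_pow_orderOf_div_card (isOfFinOrder_of_finite (rot m))
      (rotStab_le_zpowers_rot m N)
    rwa [orderOf_rot, hd] at this
  have hρd : orderOf ρ = d := by rw [← Nat.card_zpowers, ← hHρ, hd]
  have hρN : ρ • N = N :=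
    rotStab_le_stabilizer m N (by rw [hHρ]; exact Subgroup.mem_zpowers ρ)
  obtain ⟨T, hTN, hdisj, hunion⟩ := exists_transversal_pow_smul (isOfFinOrder_of_finite ρ) hρN
    fun I hI φ hφ => hfree I hI φ (hHρ ▸ hφ)
  rw [hρd] at hdisj hunion
  have hcard : N.ncard = d * T.ncard :=
    hunion ▸ ncard_biUnion_range_pow_smul ρ (hN.1.subset hTN) hdisj
  have hd0 : 0 < d := hρd ▸ (isOfFinOrder_of_finite ρ).orderOf_pos
  refine ⟨fun I hI => hd ▸ Subgroup.ncard_setOf_eq_smul_of_free (hfree I hI), ⟨T.ncard, hcard⟩,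
    fun i => ρ ^ i • T, fun i hi => ?_, hdisj, hunion, fun i _ => ?_,
    fun i _ => by simp only [pow_zero, one_smul]⟩
  · rw [← hunion]
    exact Set.subset_biUnion_of_mem (u := fun i => ρ ^ i • T) (Finset.mem_range.mpr hi)
  · rw [Set.ncard_smul_set, hcard, Nat.mul_div_cancel_left _ hd0]

theorem rotation_stab_acts_freely (m d : ℕ) (hm : 3 ≤ m) (N : Set (Set (ZMod m)))
    (hN : IsNested m N) (hne : N.Nonempty)
    (hd : Nat.card (rotStab m N) = d) :
    (∀ I ∈ N, {J : Set (ZMod m) | ∃ φ ∈ rotStab m N, J = φ • I}.ncard = d) ∧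
    d ∣ N.ncard ∧
    ∃ Ns : ℕ → Set (Set (ZMod m)),
      (∀ i < d, Ns i ⊆ N) ∧
      (∀ i < d, ∀ j < d, i ≠ j → Disjoint (Ns i) (Ns j)) ∧
      (⋃ i ∈ Finset.range d, Ns i) = N ∧
      (∀ i < d, (Ns i).ncard = N.ncard / d) ∧
      (∀ i < d, ((rot m) ^ (m / d)) ^ i • Ns 0 = Ns i) :=
  rotation_stab_acts_freely_general m d hm N hN hd
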